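/- Let G be a graph on ordered vertex set v_1 < ... < v_n and let I be an interval of vertices partitioned into its local modules L_1, ..., L_k (maximal intervals whose vertices all have the same neighborhood outside I). If the adjacency matrix of G (in this order) is d-mixed free, then the graph R on [k] with an edge ij whenever the zone [L_i, L_j] is mixed has at most (mt_d/2)·k edges, where mt_d is the Marcus–Tardos constant; consequently R is properly (mt_d + 1)-colorable. -/

import Mathlib

/-!
For a set `S` of local modules, merge consecutive blocks of the division of `I` into local modules
(clamped to a division of all vertices) into `#S` blocks so that the modules of `S` land in distinct
blocks. A mixed zone `[L_i, L_j]` with `i, j ∈ S` lies inside a zone of this `#S`-division, which is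
then mixed, so by Marcus–Tardos `S` spans at most `mt * #S` ordered mixed pairs. For `S` everything this is the edge
bound; since it holds for every `S`, the graph is `mt`-degenerate and hence `(mt + 1)`-colorable.
-/

def ZoneHorizontal {m n : ℕ} (M : Matrix (Fin m) (Fin n) (Fin 3))
    (R : Fin m → Prop) (C : Fin n → Prop) : Prop :=
  ∀ i, R i → ∀ j j', C j → C j' → M i j = M i j'

def ZoneVertical {m n : ℕ} (M : Matrix (Fin m) (Fin n) (Fin 3))
    (R : Fin m → Prop) (C : Fin n → Prop) : Prop :=
  ∀ j, C j → ∀ i i', R i → R i' → M i j = M i' j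

def ZoneMixed {m n : ℕ} (M : Matrix (Fin m) (Fin n) (Fin 3))
    (R : Fin m → Prop) (C : Fin n → Prop) : Prop :=
  (¬ ZoneHorizontal M R C ∧ ¬ ZoneVertical M R C) ∨
    ((∃ i i', R i ∧ R i' ∧ i ≠ i') ∧ (∃ j j', C j ∧ C j' ∧ j ≠ j') ∧
      ∃ i j, R i ∧ C j ∧ M i j = 2)

/-- `M` has a `d`-mixed minor: a `d`-division (monotone surjective block maps)
with all `d²` zones mixed. -/
def HasMixedMinor {m n : ℕ} (M : Matrix (Fin m) (Fin n) (Fin 3)) (d : ℕ) : Prop :=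
  ∃ (r : Fin m → Fin d) (c : Fin n → Fin d),
    Monotone r ∧ Monotone c ∧ Function.Surjective r ∧ Function.Surjective c ∧
    ∀ i j : Fin d, ZoneMixed M (fun x => r x = i) (fun y => c y = j)

open Classical in
/-- The adjacency matrix (in the natural order of `Fin n`) with `*` (= `2`)
on the diagonal. -/
noncomputable def adjMat {n : ℕ} (G : SimpleGraph (Fin n)) :
    Matrix (Fin n) (Fin n) (Fin 3) :=
  fun i j => if i = j then 2 else if G.Adj i j then 1 else 0

open Finset

lemma ZoneMixed.mono {m n : ℕ} {M : Matrix (Fin m) (Fin n) (Fin 3)}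
    {R R' : Fin m → Prop} {C C' : Fin n → Prop}
    (hR : ∀ i, R i → R' i) (hC : ∀ j, C j → C' j) (h : ZoneMixed M R C) :
    ZoneMixed M R' C' := by
  rcases h with ⟨hH, hV⟩ | ⟨⟨a, a', ha, ha', hne⟩, ⟨b, b', hb, hb', hne'⟩, ⟨x, y, hx, hy, hxy⟩⟩
  · exact Or.inl ⟨fun h => hH fun i hi j j' hj hj' => h i (hR i hi) j j' (hC j hj) (hC j' hj'),
      fun h => hV fun j hj i i' hi hi' => h j (hC j hj) i i' (hR i hi) (hR i' hi')⟩
  · exact Or.inr ⟨⟨a, a', hR _ ha, hR _ ha', hne⟩, ⟨b, b', hC _ hb, hC _ hb', hne'⟩,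
      x, y, hR _ hx, hC _ hy, hxy⟩

/-- `mt` is a Marcus–Tardos constant for `M`. -/
def MixedZonesBoundedBy {a b : ℕ} (M : Matrix (Fin a) (Fin b) (Fin 3)) (mt : ℕ) : Prop :=
  ∀ (l : ℕ) (r : Fin a → Fin l) (c : Fin b → Fin l),
    Monotone r → Monotone c → Function.Surjective r → Function.Surjective c →
    {p : Fin l × Fin l | ZoneMixed M (fun x => r x = p.1) (fun y => c y = p.2)}.ncard ≤ mt * l

lemma Finset.exists_monotone_surjective_injOn {α : Type*} [LinearOrder α] (S : Finset α)
    (hS : S.Nonempty) :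
    ∃ f : α → Fin #S, Monotone f ∧ Function.Surjective f ∧ Set.InjOn f S := by
  let rank : α → ℕ := fun x => #{y ∈ S | y ≤ x}
  have rank_le : ∀ x, rank x ≤ #S := fun x => card_filter_le _ _
  have rank_pos : ∀ x ∈ S, 0 < rank x := fun x hx => card_pos.2 ⟨x, by simp [hx]⟩
  have rank_mono : Monotone rank := fun x y hxy =>
    card_le_card (monotone_filter_right _ fun _ _ hz => hz.trans hxy)
  have rank_strictMonoOn : StrictMonoOn rank S := fun x _ y hy hxy =>
    card_lt_card <| (ssubset_iff_of_subset
      (monotone_filter_right _ fun _ _ hz => hz.trans hxy.le)).2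
      ⟨y, by simpa using hy, by simp [hxy]⟩
  let f : α → Fin #S := fun x => ⟨rank x - 1, by have := rank_le x; have := hS.card_pos; omega⟩
  have f_injOn : Set.InjOn f S := fun x hx y hy hxy => by
    have := rank_pos x hx; have := rank_pos y hy; have := congrArg Fin.val hxy
    exact rank_strictMonoOn.injOn hx hy (by simp only [f] at this; omega)
  refine ⟨f, fun x y hxy => Fin.le_def.2 (Nat.sub_le_sub_right (rank_mono hxy) 1), ?_, f_injOn⟩
  have himage : S.image f = univ :=
    eq_univ_of_card _ (by rw [card_image_of_injOn f_injOn, Fintype.card_fin])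
  intro t
  obtain ⟨x, -, hx⟩ := mem_image.1 (himage ▸ mem_univ t)
  exact ⟨x, hx⟩

/-- Merging blocks along a monotone collapse of `α` onto `Fin #S` that is injective on `S` keeps
the zones `[i, j]` with `i, j ∈ S` mixed and distinct, so the Marcus–Tardos bound applies. -/
lemma card_adj_pairs_le_of_zoneMixed {a b mt : ℕ} {α : Type*} [LinearOrder α]
    {M : Matrix (Fin a) (Fin b) (Fin 3)} (hM : MixedZonesBoundedBy M mt)
    {ρ : Fin a → α} {κ : Fin b → α} (hρ : Monotone ρ) (hκ : Monotone κ)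
    (hρs : Function.Surjective ρ) (hκs : Function.Surjective κ)
    (R : SimpleGraph α) [DecidableRel R.Adj]
    (hR : ∀ i j, R.Adj i j → ZoneMixed M (fun x => ρ x = i) (fun y => κ y = j))
    (S : Finset α) :
    #{p ∈ S ×ˢ S | R.Adj p.1 p.2} ≤ mt * #S := by
  rcases S.eq_empty_or_nonempty with rfl | hS
  · simp
  obtain ⟨f, hf, hfs, hfi⟩ := S.exists_monotone_surjective_injOn hS
  have hmaps : ∀ p ∈ (({p ∈ S ×ˢ S | R.Adj p.1 p.2} : Finset (α × α)) : Set (α × α)),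
      Prod.map f f p ∈ {q : Fin #S × Fin #S |
        ZoneMixed M (fun x => f (ρ x) = q.1) (fun y => f (κ y) = q.2)} := by
    intro p hp
    exact (hR p.1 p.2 (mem_filter.1 hp).2).mono (fun x (hx : ρ x = p.1) => by simp [hx])
      (fun y (hy : κ y = p.2) => by simp [hy])
  have hinj : Set.InjOn (Prod.map f f)
      (({p ∈ S ×ˢ S | R.Adj p.1 p.2} : Finset (α × α)) : Set (α × α)) :=
    (hfi.prodMap hfi).mono fun p hp => by simpa using (mem_filter.1 hp).1
  calc #{p ∈ S ×ˢ S | R.Adj p.1 p.2}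
      = (({p ∈ S ×ˢ S | R.Adj p.1 p.2} : Finset (α × α)) : Set (α × α)).ncard :=
        (Set.ncard_coe_finset _).symm
    _ ≤ _ := Set.ncard_le_ncard_of_injOn _ hmaps hinj (Set.toFinite _)
    _ ≤ mt * #S := hM _ _ _ (hf.comp hρ) (hf.comp hκ) (hfs.comp hρs) (hfs.comp hκs)

namespace SimpleGraph

variable {V : Type*} (R : SimpleGraph V) [DecidableRel R.Adj]

lemma card_adj_pairs_eq_sum (S : Finset V) :
    #{p ∈ S ×ˢ S | R.Adj p.1 p.2} = ∑ v ∈ S, #{u ∈ S | R.Adj v u} := by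
  simp only [card_filter, sum_product]

lemma card_adj_pairs_univ [Fintype V] :
    #{p ∈ univ ×ˢ univ | R.Adj p.1 p.2} = 2 * #R.edgeFinset := by
  rw [card_adj_pairs_eq_sum, ← sum_degrees_eq_twice_card_edges]
  simp only [← card_neighborFinset_eq_degree, neighborFinset_eq_filter]

def IsProperColoringOn {C : Type*} (S : Set V) (g : V → C) : Prop :=
  ∀ ⦃u⦄, u ∈ S → ∀ ⦃w⦄, w ∈ S → R.Adj u w → g u ≠ g w

lemma exists_isProperColoringOn_of_erase [DecidableEq V] {m : ℕ} {S : Finset V} {v : V}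
    (hdeg : #{u ∈ S | R.Adj v u} ≤ m) {g : V → Fin (m + 1)}
    (hg : R.IsProperColoringOn (S.erase v : Set V) g) :
    ∃ g' : V → Fin (m + 1), R.IsProperColoringOn (S : Set V) g' := by
  obtain ⟨c, -, hc⟩ := exists_mem_notMem_of_card_lt_card
    (s := {u ∈ S | R.Adj v u}.image g) (t := univ)
    (by rw [card_univ, Fintype.card_fin]; exact Nat.lt_succ_of_le (card_image_le.trans hdeg))
  have hv : ∀ ⦃u⦄, u ∈ S → R.Adj v u → Function.update g v c v ≠ Function.update g v c u := by
    intro u hu hvu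
    rw [Function.update_self, Function.update_of_ne hvu.ne.symm]
    exact fun h => hc (h ▸ mem_image_of_mem g (mem_filter.2 ⟨hu, hvu⟩))
  refine ⟨Function.update g v c, fun u hu w hw huw => ?_⟩
  by_cases huv : u = v
  · subst huv
    exact hv hw huw
  by_cases hwv : w = v
  · subst hwv
    exact (hv hu huw.symm).symm
  rw [Function.update_of_ne huv, Function.update_of_ne hwv]
  exact hg (by simp [huv, hu]) (by simp [hwv, hw]) huw

/-- Degeneracy: by averaging, some vertex of `S` has at most `m` neighbours in `S`;
color it last. -/
theorem colorable_of_card_adj_pairs_le [Fintype V] {m : ℕ}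
    (h : ∀ S : Finset V, #{p ∈ S ×ˢ S | R.Adj p.1 p.2} ≤ m * #S) : R.Colorable (m + 1) := by
  classical
  suffices ∀ S : Finset V, ∃ g : V → Fin (m + 1), R.IsProperColoringOn (S : Set V) g by
    obtain ⟨g, hg⟩ := this univ
    exact ⟨Coloring.mk g fun huw => hg (mem_univ _) (mem_univ _) huw⟩
  intro S
  induction S using Finset.strongInduction with
  | _ S ih =>
  rcases S.eq_empty_or_nonempty with rfl | hS
  · exact ⟨fun _ => 0, by simp [IsProperColoringOn]⟩
  have hsum : ∑ v ∈ S, #{u ∈ S | R.Adj v u} ≤ ∑ _v ∈ S, m := by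
    rw [← card_adj_pairs_eq_sum, sum_const, smul_eq_mul, mul_comm]
    exact h S
  obtain ⟨v, hvS, hdeg⟩ := exists_le_of_sum_le hS hsum
  obtain ⟨g, hg⟩ := ih (S.erase v) (erase_ssubset hvS)
  exact R.exists_isProperColoringOn_of_erase hdeg hg

end SimpleGraph

theorem mixedPairsGraph_few_edges_general {n d k : ℕ} (G : SimpleGraph (Fin n))
    (mt : ℕ)
    (hmt : ∀ (a b : ℕ) (M : Matrix (Fin a) (Fin b) (Fin 3)), ¬ HasMixedMinor M d →
      ∀ (l : ℕ) (r : Fin a → Fin l) (c : Fin b → Fin l),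
        Monotone r → Monotone c → Function.Surjective r → Function.Surjective c →
        {p : Fin l × Fin l |
          ZoneMixed M (fun x => r x = p.1) (fun y => c y = p.2)}.ncard ≤ mt * l)
    (hfree : ¬ HasMixedMinor (adjMat G) d)
    (lo hi : ℕ) (hhi : hi < n)
    (I : Set (Fin n)) (hI : I = {v : Fin n | lo ≤ v.val ∧ v.val ≤ hi})
    (part : Fin n → Fin k)
    (hmono : ∀ u v : Fin n, u ∈ I → v ∈ I → u ≤ v → part u ≤ part v)
    (hsurj : ∀ i : Fin k, ∃ v ∈ I, part v = i)
    (R : SimpleGraph (Fin k))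
    (hR : ∀ i j, R.Adj i j ↔ i ≠ j ∧
      ZoneMixed (adjMat G) (fun x => x ∈ I ∧ part x = i) (fun y => y ∈ I ∧ part y = j)) :
    2 * R.edgeSet.ncard ≤ mt * k ∧ R.Colorable (mt + 1) := by
  classical
  have hsparse : ∀ S : Finset (Fin k), #{p ∈ S ×ˢ S | R.Adj p.1 p.2} ≤ mt * #S := by
    rcases isEmpty_or_nonempty (Fin k) with hk | ⟨⟨i₀⟩⟩
    · intro S
      simp [S.eq_empty_of_isEmpty]
    obtain ⟨v₀, hv₀, -⟩ := hsurj i₀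
    subst hI
    let a : Fin n := ⟨lo, hv₀.1.trans_lt v₀.isLt⟩
    let b : Fin n := ⟨hi, hhi⟩
    have hI : {v : Fin n | lo ≤ v.val ∧ v.val ≤ hi} = Set.Icc a b := by
      ext v
      simp [a, b, Fin.le_def]
    rw [hI] at hmono hsurj hR hv₀
    let ρ : Fin n → Fin k := Set.IccExtend (hv₀.1.trans hv₀.2) fun v => part v
    have hρI : ∀ v ∈ Set.Icc a b, ρ v = part v := fun v hv => Set.IccExtend_of_mem _ _ hv
    have hρ : Monotone ρ := Monotone.IccExtend _ fun u v huv => hmono u v u.2 v.2 huv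
    have hρs : Function.Surjective ρ := fun i => by
      obtain ⟨v, hv, rfl⟩ := hsurj i
      exact ⟨v, hρI v hv⟩
    refine card_adj_pairs_le_of_zoneMixed (hmt n n (adjMat G) hfree) hρ hρ hρs hρs R
      (fun i j hij => ((hR i j).1 hij).2.mono ?_ ?_)
    · exact fun x hx => (hρI x hx.1).trans hx.2
    · exact fun y hy => (hρI y hy.1).trans hy.2
  refine ⟨?_, R.colorable_of_card_adj_pairs_le hsparse⟩
  have hedges := hsparse univ
  rw [R.card_adj_pairs_univ, card_univ, Fintype.card_fin] at hedges
  rwa [Set.ncard_eq_toFinset_card']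

/-- Let `G` be a graph on the ordered vertex set `Fin n` whose adjacency matrix
is `d`-mixed free, let `I = [lo, hi]` be an interval of vertices partitioned
into its local modules `L_1, …, L_k` (consecutive, maximal sets of vertices
with the same neighbourhood outside `I`), and let `mt` be a Marcus–Tardos
constant for `d` (in any `k`-division of a `d`-mixed free matrix, at most
`mt·k` zones are mixed). Then the graph `R` on `Fin k` whose edges are the
mixed pairs of local modules has at most `(mt/2)·k` edges, and is therefore
properly `(mt+1)`-colorable. -/
theorem mixedPairsGraph_few_edges {n d k : ℕ} (G : SimpleGraph (Fin n))
    (mt : ℕ)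
    (hmt : ∀ (a b : ℕ) (M : Matrix (Fin a) (Fin b) (Fin 3)), ¬ HasMixedMinor M d →
      ∀ (l : ℕ) (r : Fin a → Fin l) (c : Fin b → Fin l),
        Monotone r → Monotone c → Function.Surjective r → Function.Surjective c →
        {p : Fin l × Fin l |
          ZoneMixed M (fun x => r x = p.1) (fun y => c y = p.2)}.ncard ≤ mt * l)
    (hfree : ¬ HasMixedMinor (adjMat G) d)
    (lo hi : ℕ) (hhi : hi < n)
    (I : Set (Fin n)) (hI : I = {v : Fin n | lo ≤ v.val ∧ v.val ≤ hi})
    (part : Fin n → Fin k)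
    (hmono : ∀ u v : Fin n, u ∈ I → v ∈ I → u ≤ v → part u ≤ part v)
    (hsurj : ∀ i : Fin k, ∃ v ∈ I, part v = i)
    (hloc : ∀ u v, u ∈ I → v ∈ I → part u = part v →
      ∀ w, w ∉ I → (G.Adj u w ↔ G.Adj v w))
    (hmax : ∀ u v : Fin n, u ∈ I → v ∈ I → v.val = u.val + 1 → part u ≠ part v →
      ∃ w, w ∉ I ∧ ¬ (G.Adj u w ↔ G.Adj v w))
    (R : SimpleGraph (Fin k))
    (hR : ∀ i j, R.Adj i j ↔ i ≠ j ∧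
      ZoneMixed (adjMat G) (fun x => x ∈ I ∧ part x = i) (fun y => y ∈ I ∧ part y = j)) :
    2 * R.edgeSet.ncard ≤ mt * k ∧ R.Colorable (mt + 1) :=
  mixedPairsGraph_few_edges_general G mt hmt hfree lo hi hhi I hI part hmono hsurj R hR
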